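/- If T is a unitary operator on a real Hilbert space H and x ∈ H, then the ergodic averages (1/n)·∑_{k=1}^n T^k(x) converge in norm to the orthogonal projection of x onto the closed subspace {y ∈ H : T(y) = y} of T-fixed vectors. -/

import Mathlib

open Filter Finset
open scoped Topology

/-!
Mathlib's mean ergodic theorem for contractions gives `(1/n) ∑_{k<n} T^k y → P y`, `P` the
orthogonal projection onto the fixed vectors. At `y = T x` these are the averages
`(1/n) ∑_{k=1}^n T^k x`, and `P (T x) = P x`: for `T y = y`, `⟪T x, y⟫ = ⟪T x, T y⟫ = ⟪x, y⟫`.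
-/

theorem birkhoffSum_apply_eq_sum_Icc {α M : Type*} [AddCommMonoid M] (f : α → α) (g : α → M)
    (n : ℕ) (x : α) : birkhoffSum f g n (f x) = ∑ k ∈ Icc 1 n, g (f^[k] x) := by
  rw [← Ico_add_one_right_eq_Icc, sum_Ico_eq_sum_range, birkhoffSum]
  simp only [add_tsub_cancel_right, add_comm 1, Function.iterate_succ_apply]

theorem LinearIsometryEquiv.coe_pow {R E : Type*} [Semiring R] [SeminormedAddCommGroup E]
    [Module R E] (T : E ≃ₗᵢ[R] E) (n : ℕ) : ⇑(T ^ n) = T^[n] :=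
  hom_coe_pow _ rfl (fun _ _ ↦ rfl) _ _

theorem LinearIsometryEquiv.inner_map_left_of_apply_eq {𝕜 H : Type*} [RCLike 𝕜]
    [NormedAddCommGroup H] [InnerProductSpace 𝕜 H] (T : H ≃ₗᵢ[𝕜] H) (x : H) {y : H}
    (hy : T y = y) : inner 𝕜 (T x) y = inner 𝕜 x y := by
  rw [← T.inner_map_map x y, hy]

/-- Von Neumann mean ergodic theorem: for a unitary operator `T` on a real Hilbert
space `H` and `x ∈ H`, the ergodic averages `(1/n) ∑_{k=1}^n T^k x` converge in norm
to the orthogonal projection of `x` onto the closed subspace of `T`-fixed vectors. -/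
theorem stmt0 {H : Type*} [NormedAddCommGroup H] [InnerProductSpace ℝ H] [CompleteSpace H]
    (T : H ≃ₗᵢ[ℝ] H) (x : H) :
    ∃ p : H, T p = p ∧ (∀ y : H, T y = y → inner ℝ (x - p) y = (0 : ℝ)) ∧
      Tendsto (fun n : ℕ => (n : ℝ)⁻¹ • ∑ k ∈ Finset.Icc 1 n, (T ^ k) x)
        atTop (𝓝 p) := by
  set f : H →L[ℝ] H := T.toLinearIsometry.toContinuousLinearMap
  refine ⟨(f.eqLocus (1 : H →L[ℝ] H)).orthogonalProjectionOnto (T x),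
    ((f.eqLocus (1 : H →L[ℝ] H)).orthogonalProjectionOnto (T x)).2, fun y hy ↦ ?_, ?_⟩
  · rw [inner_sub_left, ← T.inner_map_left_of_apply_eq x hy, ← inner_sub_left]
    exact (f.eqLocus (1 : H →L[ℝ] H)).starProjection_inner_eq_zero (T x) y hy
  · refine (f.tendsto_birkhoffAverage_orthogonalProjection
      T.toLinearIsometry.norm_toContinuousLinearMap_le (T x)).congr fun n ↦ ?_
    change (n : ℝ)⁻¹ • birkhoffSum T id n (T x) = _
    simp only [birkhoffSum_apply_eq_sum_Icc, T.coe_pow, id]
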